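/- Consider the Game of Graph Nim on the graph H₁ (path A–B–C–D with edges AB, BC, CD, plus a disjoint edge EF). Let k ≥ 1 and let r be the unique natural number with 2^r ≤ k < 2^{r+1}. Suppose w(EF) = k, w(AB) = 2^{r+1}·m₁ + ℓ₁ and w(CD) = 2^{r+1}·m₂ + ℓ₂ with ℓ₁, ℓ₂ < 2^{r+1}, all of w(AB), w(BC), w(CD) positive, and m₁ ≠ m₂. Then the configuration is a winning position for the first player. -/

import Mathlib

/-!
Once `BC` is empty, every vertex of `H₁` meets at most one nonempty edge, so the game is Nim on
the heaps `AB`, `CD`, `EF`, and positions of Nim-sum zero are losing. If `m₁ < m₂`, the first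
player plays at `C`, empties `BC` and lowers `CD` to `AB ⊕ EF`; this is possible because
`EF < 2^(r+1)` leaves the high block of `AB` alone:
`AB ⊕ EF = 2^(r+1) m₁ + (ℓ₁ ⊕ k) < 2^(r+1) m₂ ≤ CD`. Symmetrically at `B` if `m₂ < m₁`.
-/

namespace GraphNim

variable {V E : Type} [Fintype E]

/-- A legal move in the Game of Graph Nim: choose a vertex `v` and weakly decrease
the weights of edges incident to `v` (all other edges unchanged), strictly
decreasing the total weight. -/
def Move (inc : V → E → Prop) (w w' : E → ℕ) : Prop :=
  ∃ v : V, (∀ e, w' e ≤ w e) ∧ (∀ e, ¬ inc v e → w' e = w e) ∧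
    (∑ e, w' e) < (∑ e, w e)

/-- A configuration is losing for the player to move: every legal move leads to a
non-losing configuration (the all-zero configuration is vacuously losing). -/
def Losing (inc : V → E → Prop) (w : E → ℕ) : Prop :=
  ∀ w', Move inc w w' → ¬ Losing inc w'
termination_by ∑ e, w e
decreasing_by
  rename_i h
  obtain ⟨v, _, _, h3⟩ := h
  exact h3

/-- A configuration is winning for the player to move: some legal move leads to a
losing configuration. -/
def Winning (inc : V → E → Prop) (w : E → ℕ) : Prop :=
  ∃ w', Move inc w w' ∧ Losing inc w'

end GraphNim

open GraphNim

/-- Endpoints of the edges of the graph `H₁` (path `A–B–C–D` plus a disjoint edge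
`EF`): vertices `A = 0, …, F = 5`, edges `AB = 0, BC = 1, CD = 2, EF = 3`. -/
def h1Ends : Fin 4 → Fin 6 × Fin 6
  | 0 => (0, 1)
  | 1 => (1, 2)
  | 2 => (2, 3)
  | 3 => (4, 5)

def h1Inc (v : Fin 6) (e : Fin 4) : Prop := (h1Ends e).1 = v ∨ (h1Ends e).2 = v

namespace GraphNim

variable {V E : Type} [Fintype E] {inc : V → E → Prop}

theorem Move.sum_lt {w w' : E → ℕ} (hmove : Move inc w w') : ∑ e, w' e < ∑ e, w e := by
  obtain ⟨_, _, _, hlt⟩ := hmove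
  exact hlt

theorem losing_of_forall_move_exists_move (P : (E → ℕ) → Prop)
    (hP : ∀ w, P w → ∀ w', Move inc w w' → ∃ w'', Move inc w' w'' ∧ P w'') :
    ∀ w, P w → Losing inc w := by
  suffices ∀ n w, ∑ e, w e ≤ n → P w → Losing inc w from fun w => this _ w le_rfl
  intro n
  induction n with
  | zero =>
    intro w hw _
    rw [Losing]
    intro w' hmove
    have := hmove.sum_lt
    omega
  | succ n ih =>
    intro w hw hPw
    rw [Losing]
    intro w' hmove hlosing'
    obtain ⟨w'', hmove', hPw''⟩ := hP w hPw w' hmove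
    have hsum : ∑ e, w'' e ≤ n := by
      have := hmove.sum_lt
      have := hmove'.sum_lt
      omega
    rw [Losing] at hlosing'
    exact hlosing' w'' hmove' (ih w'' hsum hPw'')

theorem move_of_le_of_lt {w w' : E → ℕ} (v : V) (hle : ∀ e, w' e ≤ w e)
    (hfix : ∀ e, ¬ inc v e → w' e = w e) {e₀ : E} (hlt : w' e₀ < w e₀) :
    Move inc w w' :=
  ⟨v, hle, hfix, Finset.sum_lt_sum (fun e _ => hle e) ⟨e₀, Finset.mem_univ _, hlt⟩⟩

theorem move_update [DecidableEq E] {w : E → ℕ} {v : V} {e : E} {x : ℕ} (hv : inc v e)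
    (hx : x < w e) : Move inc w (Function.update w e x) := by
  refine move_of_le_of_lt (e₀ := e) v (fun e' => ?_) (fun e' he' => ?_) (by simpa using hx)
  · rcases eq_or_ne e' e with rfl | h
    · simpa using hx.le
    · simp [h]
  · exact Function.update_of_ne (by rintro rfl; exact he' hv) _ _

theorem Move.exists_eq_update [DecidableEq E] {w w' : E → ℕ} (hmove : Move inc w w')
    (hw : ∀ v, ∃ e, ∀ e', e' ≠ e → inc v e' → w e' = 0) :
    ∃ e, w' e < w e ∧ w' = Function.update w e (w' e) := by
  obtain ⟨v, hle, hfix, hlt⟩ := hmove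
  obtain ⟨e, he⟩ := hw v
  have hother : ∀ e', e' ≠ e → w' e' = w e' := fun e' hne => by
    by_cases hinc : inc v e'
    · have := hle e'
      rw [he e' hne hinc] at this ⊢
      omega
    · exact hfix e' hinc
  have hupdate : w' = Function.update w e (w' e) := by
    funext e'
    rcases eq_or_ne e' e with rfl | hne
    · simp
    · simp [hne, hother e' hne]
  refine ⟨e, lt_of_le_of_ne (hle e) fun heq => hlt.ne ?_, hupdate⟩
  rw [hupdate, heq, Function.update_eq_self]

end GraphNim

theorem Nat.two_pow_mul_add_xor {n m l k : ℕ} (hl : l < 2 ^ n) (hk : k < 2 ^ n) :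
    (2 ^ n * m + l) ^^^ k = 2 ^ n * m + (l ^^^ k) := by
  apply Nat.eq_of_testBit_eq
  intro j
  rw [Nat.testBit_xor, Nat.testBit_two_pow_mul_add m hl,
    Nat.testBit_two_pow_mul_add m (Nat.xor_lt_two_pow hl hk)]
  by_cases hj : j < n
  · simp [hj]
  · have hkj : k.testBit j = false :=
      Nat.testBit_lt_two_pow (hk.trans_le (Nat.pow_le_pow_right two_pos (not_lt.mp hj)))
    simp [hj, hkj]

theorem Nat.two_pow_mul_add_xor_lt {n m₁ m₂ l₁ l₂ k : ℕ} (hl₁ : l₁ < 2 ^ n) (hk : k < 2 ^ n)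
    (hm : m₁ < m₂) : (2 ^ n * m₁ + l₁) ^^^ k < 2 ^ n * m₂ + l₂ := by
  rw [Nat.two_pow_mul_add_xor hl₁ hk]
  calc 2 ^ n * m₁ + (l₁ ^^^ k) < 2 ^ n * (m₁ + 1) := by
        rw [Nat.mul_succ]; have := Nat.xor_lt_two_pow hl₁ hk; omega
    _ ≤ 2 ^ n * m₂ := Nat.mul_le_mul_left _ hm
    _ ≤ 2 ^ n * m₂ + l₂ := Nat.le_add_right _ _

instance (v : Fin 6) (e : Fin 4) : Decidable (h1Inc v e) :=
  inferInstanceAs (Decidable (_ ∨ _))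

/-- `w 1 = w(BC)` is included so that the four edges are treated alike; it is `0` wherever the
Nim-sum is used. -/
def h1NimSum (w : Fin 4 → ℕ) : ℕ := w 0 ^^^ w 1 ^^^ w 2 ^^^ w 3

theorem h1NimSum_update (w : Fin 4 → ℕ) (e : Fin 4) (x : ℕ) :
    h1NimSum (Function.update w e x) = h1NimSum w ^^^ w e ^^^ x := by
  apply Nat.eq_of_testBit_eq
  intro i
  fin_cases e <;> simp only [h1NimSum, Nat.testBit_xor] <;> simp <;> grind

theorem h1_exists_inc (e : Fin 4) : ∃ v, h1Inc v e := ⟨(h1Ends e).1, Or.inl rfl⟩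

theorem h1_move_exists_eq_update {w w' : Fin 4 → ℕ} (hmove : Move h1Inc w w') (hBC : w 1 = 0) :
    ∃ e, w' e < w e ∧ w' = Function.update w e (w' e) := by
  have hsingle : ∀ v e, (∀ e', e' ≠ e → h1Inc v e' → e' = 1) →
      ∃ e, ∀ e', e' ≠ e → h1Inc v e' → w e' = 0 :=
    fun v e he => ⟨e, fun e' hne hinc => he e' hne hinc ▸ hBC⟩
  refine hmove.exists_eq_update fun v => ?_
  fin_cases v
  exacts [hsingle _ 0 (by decide), hsingle _ 0 (by decide), hsingle _ 2 (by decide),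
    hsingle _ 2 (by decide), hsingle _ 3 (by decide), hsingle _ 3 (by decide)]

theorem h1_exists_move_nimSum_eq_zero {w : Fin 4 → ℕ} (hBC : w 1 = 0) (hw : h1NimSum w ≠ 0) :
    ∃ w', Move h1Inc w w' ∧ w' 1 = 0 ∧ h1NimSum w' = 0 := by
  obtain ⟨e, he, hlt⟩ : ∃ e, e ≠ 1 ∧ w e ^^^ h1NimSum w < w e := by
    have h3 : w 0 ^^^ w 2 ^^^ w 3 ≠ 0 := by simpa [h1NimSum, hBC] using hw
    rcases Nat.xor_trichotomy h3 with h | h | h <;>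
      [refine ⟨0, by decide, ?_⟩; refine ⟨2, by decide, ?_⟩; refine ⟨3, by decide, ?_⟩] <;>
      simpa [h1NimSum, hBC, Nat.xor_assoc, Nat.xor_comm, Nat.xor_left_comm] using h
  obtain ⟨v, hv⟩ := h1_exists_inc e
  refine ⟨_, move_update hv hlt, by rw [Function.update_of_ne he.symm, hBC], ?_⟩
  simp [h1NimSum_update, Nat.xor_assoc]

theorem h1_losing_of_nimSum_eq_zero {w : Fin 4 → ℕ} (hBC : w 1 = 0) (hw : h1NimSum w = 0) :
    Losing h1Inc w := by
  refine losing_of_forall_move_exists_move (fun w => w 1 = 0 ∧ h1NimSum w = 0) ?_ w ⟨hBC, hw⟩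
  rintro w ⟨hBC, hw⟩ w' hmove
  obtain ⟨e, hlt, hupdate⟩ := h1_move_exists_eq_update hmove hBC
  have he : e ≠ 1 := by rintro rfl; omega
  refine h1_exists_move_nimSum_eq_zero (by rw [hupdate, Function.update_of_ne he.symm, hBC]) ?_
  rw [hupdate, h1NimSum_update, hw, Nat.zero_xor, Ne, Nat.xor_eq_zero_iff]
  exact hlt.ne'

/-- The winning move empties `BC` from its end `v` and lowers the other edge `e` at `v` to make
the Nim-sum zero. -/
theorem h1_winning_of_lt {w : Fin 4 → ℕ} {v : Fin 6} {e : Fin 4} (hv : h1Inc v 1)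
    (hve : h1Inc v e) (he : e ≠ 1)
    (hlt : w e ^^^ h1NimSum (Function.update w 1 0) < w e) : Winning h1Inc w := by
  set x := w e ^^^ h1NimSum (Function.update w 1 0)
  refine ⟨Function.update (Function.update w 1 0) e x,
    move_of_le_of_lt (e₀ := e) v (fun e' => ?_) (fun e' he' => ?_) (by simpa using hlt),
    h1_losing_of_nimSum_eq_zero (by simp [he.symm]) ?_⟩
  · rcases eq_or_ne e' e with rfl | hne
    · simpa using hlt.le
    · rcases eq_or_ne e' 1 with rfl | hne1 <;> simp [*]
  · have hne : e' ≠ e := by rintro rfl; exact he' hve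
    have hne1 : e' ≠ 1 := by rintro rfl; exact he' hv
    simp [hne, hne1]
  · simp [h1NimSum_update, Function.update_of_ne he, x, Nat.xor_assoc]

theorem h1_winning_diff_blocks_general (w : Fin 4 → ℕ) (k r m₁ m₂ ℓ₁ ℓ₂ : ℕ)
    (hr2 : k < 2 ^ (r + 1))
    (hl1 : ℓ₁ < 2 ^ (r + 1)) (hl2 : ℓ₂ < 2 ^ (r + 1))
    (hEF : w 3 = k) (hAB : w 0 = 2 ^ (r + 1) * m₁ + ℓ₁)
    (hCD : w 2 = 2 ^ (r + 1) * m₂ + ℓ₂)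
    (hm : m₁ ≠ m₂) :
    Winning h1Inc w := by
  rcases hm.lt_or_gt with h | h
  · have hlt := Nat.two_pow_mul_add_xor_lt (l₂ := ℓ₂) hl1 hr2 h
    rw [← hAB, ← hEF, ← hCD] at hlt
    refine h1_winning_of_lt (v := 2) (e := 2) (by decide) (by decide) (by decide) ?_
    simpa [h1NimSum, Nat.xor_assoc, Nat.xor_comm, Nat.xor_left_comm] using hlt
  · have hlt := Nat.two_pow_mul_add_xor_lt (l₂ := ℓ₁) hl2 hr2 h
    rw [← hAB, ← hEF, ← hCD] at hlt
    refine h1_winning_of_lt (v := 1) (e := 0) (by decide) (by decide) (by decide) ?_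
    simpa [h1NimSum, Nat.xor_assoc, Nat.xor_comm, Nat.xor_left_comm] using hlt

/-- On `H₁`: if `w(EF) = k ≥ 1` with `2^r ≤ k < 2^(r+1)`, `w(AB) = 2^(r+1)·m₁ + ℓ₁`,
`w(CD) = 2^(r+1)·m₂ + ℓ₂` with `ℓ₁, ℓ₂ < 2^(r+1)`, all of `w(AB), w(BC), w(CD)`
positive, and `m₁ ≠ m₂`, then the configuration is winning for the first player. -/
theorem h1_winning_diff_blocks (w : Fin 4 → ℕ) (k r m₁ m₂ ℓ₁ ℓ₂ : ℕ)
    (hk : 1 ≤ k) (hr1 : 2 ^ r ≤ k) (hr2 : k < 2 ^ (r + 1))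
    (hl1 : ℓ₁ < 2 ^ (r + 1)) (hl2 : ℓ₂ < 2 ^ (r + 1))
    (hEF : w 3 = k) (hAB : w 0 = 2 ^ (r + 1) * m₁ + ℓ₁)
    (hCD : w 2 = 2 ^ (r + 1) * m₂ + ℓ₂)
    (hABpos : 0 < w 0) (hBCpos : 0 < w 1) (hCDpos : 0 < w 2)
    (hm : m₁ ≠ m₂) :
    Winning h1Inc w :=
  h1_winning_diff_blocks_general w k r m₁ m₂ ℓ₁ ℓ₂ hr2 hl1 hl2 hEF hAB hCD hm
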